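/- In the uniform-kernel setting, under assumption (A3), for v_0(x) < λ < v_1(x) the function γ_x(λ) = ∫ (1 − exp{V_x^{-1}(λ)(l(v) − λ)}) f_v(x) g(v) dv is differentiable with first derivative γ_x'(λ) = V_x^{-1}(λ) exp{−λ V_x^{-1}(λ)} ∫ e^{V_x^{-1}(λ) l(v)} f_v(x) g(v) dv and second derivative γ_x''(λ) = (1/V_x'(V_x^{-1}(λ)) − (V_x^{-1}(λ))²) exp{−λ V_x^{-1}(λ)} ∫ e^{V_x^{-1}(λ) l(v)} f_v(x) g(v) dv. -/

import Mathlib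

open MeasureTheory Filter Set Topology ProbabilityTheory

/-! With `ν = f g dv`, (A3) makes every exponential moment of `l` under `ν` finite, so
`A = mgf l ν` is analytic and `V = A' / A` is the derivative of the cumulant generating function
`log A`. Hence `V` is smooth and nondecreasing, `V'` being the variance of `l` under the tilted
measure `e^{tl} ν / A(t)`. Near a point where `V' > 0` the lower inverse `s = V⁻¹` is a genuine
local inverse, differentiable with derivative `1 / V'(s)`. Finally
`γ(λ) = ν(ℝ) - e^{-λ s} A(s)` with `s = V⁻¹(λ)`; since `A'(s) = λ A(s)`, the terms containing `s'`
cancel (an envelope argument), so `γ' = s e^{-λ s} A(s)` and then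
`γ'' = (s' - s²) e^{-λ s} A(s)`. -/

section WithDensity

variable {α : Type*} [MeasurableSpace α] {μ : Measure α} {w : α → ℝ}

lemma integral_withDensity_ofReal (hw : AEMeasurable w μ) (hw0 : 0 ≤ w) (F : α → ℝ) :
    ∫ x, F x ∂μ.withDensity (fun x => ENNReal.ofReal (w x)) = ∫ x, F x * w x ∂μ := by
  rw [integral_withDensity_eq_integral_toReal_smul₀ hw.ennreal_ofReal
    (ae_of_all _ fun _ => ENNReal.ofReal_lt_top)]
  simp [ENNReal.toReal_ofReal (hw0 _), mul_comm]

lemma integrable_withDensity_ofReal_iff (hw : AEMeasurable w μ) (hw0 : 0 ≤ w) {F : α → ℝ} :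
    Integrable F (μ.withDensity fun x => ENNReal.ofReal (w x)) ↔
      Integrable (fun x => F x * w x) μ := by
  rw [integrable_withDensity_iff_integrable_smul₀' hw.ennreal_ofReal
    (ae_of_all _ fun _ => ENNReal.ofReal_lt_top)]
  simp [ENNReal.toReal_ofReal (hw0 _), mul_comm]

end WithDensity

section Cumulant

variable {Ω : Type*} [MeasurableSpace Ω] {X : Ω → ℝ} {μ : Measure Ω}

lemma integral_one_sub_exp_mul_sub [IsFiniteMeasure μ] {t : ℝ}
    (h : Integrable (fun ω => Real.exp (t * X ω)) μ) (y : ℝ) :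
    ∫ ω, (1 - Real.exp (t * (X ω - y))) ∂μ =
      μ.real univ - Real.exp (-(y * t)) * mgf X μ t := by
  have hsplit : ∀ ω, Real.exp (t * (X ω - y)) = Real.exp (-(y * t)) * Real.exp (t * X ω) :=
    fun ω => by rw [← Real.exp_add]; ring_nf
  simp_rw [hsplit]
  rw [integral_sub (integrable_const 1) (h.const_mul _), integral_const_mul, integral_const,
    smul_eq_mul, mul_one, mgf]

variable (h : ∀ t, Integrable (fun ω => Real.exp (t * X ω)) μ)
include h

lemma mem_interior_integrableExpSet (t : ℝ) : t ∈ interior (integrableExpSet X μ) := by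
  simp [show integrableExpSet X μ = univ from eq_univ_of_forall h]

lemma mgf_mul_deriv_cgf (t : ℝ) : mgf X μ t * deriv (cgf X μ) t = deriv (mgf X μ) t := by
  rcases eq_or_ne μ 0 with rfl | hμ
  · simp
  rw [deriv_cgf (mem_interior_integrableExpSet h t), deriv_mgf (mem_interior_integrableExpSet h t),
    mul_div_cancel₀ _ (mgf_pos' hμ (h t)).ne']

lemma analyticAt_deriv_cgf (t : ℝ) : AnalyticAt ℝ (deriv (cgf X μ)) t :=
  (analyticAt_cgf (mem_interior_integrableExpSet h t)).deriv

lemma differentiable_deriv_cgf : Differentiable ℝ (deriv (cgf X μ)) :=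
  fun t => (analyticAt_deriv_cgf h t).differentiableAt

lemma monotone_deriv_cgf : Monotone (deriv (cgf X μ)) := by
  refine monotone_of_deriv_nonneg (differentiable_deriv_cgf h) fun t => ?_
  rw [← iteratedDeriv_one, ← iteratedDeriv_succ',
    ← variance_tilted_mul (mem_interior_integrableExpSet h t)]
  exact variance_nonneg _ _

end Cumulant

lemma hasDerivAt_exp_neg_mul_mul_comp {M s : ℝ → ℝ} {y s' : ℝ}
    (hM : HasDerivAt M (y * M (s y)) (s y)) (hs : HasDerivAt s s' y) :
    HasDerivAt (fun z => Real.exp (-(z * s z)) * M (s z))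
      (-(s y * (Real.exp (-(y * s y)) * M (s y)))) y :=
  ((((hasDerivAt_id' y).fun_mul hs).fun_neg.exp).fun_mul (hM.comp y hs)).congr_deriv
    (by simp only [Function.comp_apply]; ring)

noncomputable def lowerInverse (V : ℝ → ℝ) (y : ℝ) : ℝ := sInf {s | y ≤ V s}

section LowerInverse

variable {V : ℝ → ℝ}

lemma lowerInverse_mem_Icc_and_apply_eq (hV : Monotone V) (hVc : Continuous V) {a b y : ℝ}
    (ha : V a < y) (hb : y ≤ V b) :
    lowerInverse V y ∈ Icc a b ∧ V (lowerInverse V y) = y := by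
  set S := {s | y ≤ V s}
  have ha_lb : a ∈ lowerBounds S := fun s hs =>
    le_of_lt <| hV.reflect_lt (ha.trans_le hs)
  have hS : BddBelow S := ⟨a, ha_lb⟩
  obtain ⟨c, hc, hVc_eq⟩ := intermediate_value_Icc (hV.reflect_lt (ha.trans_le hb)).le
    hVc.continuousOn ⟨ha.le, hb⟩
  have hle_c : lowerInverse V y ≤ c := csInf_le hS hVc_eq.ge
  have hmem : lowerInverse V y ∈ S :=
    (isClosed_le continuous_const hVc).csInf_mem ⟨c, hVc_eq.ge⟩ hS
  exact ⟨⟨le_csInf ⟨c, hVc_eq.ge⟩ ha_lb, hle_c.trans hc.2⟩,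
    le_antisymm ((hV hle_c).trans_eq hVc_eq) hmem⟩

lemma eventually_lowerInverse_mem_Icc_and_apply_eq (hV : Monotone V) (hVc : Continuous V)
    {s δ y : ℝ} (h₁ : V (s - δ) < y) (h₂ : y < V (s + δ)) :
    ∀ᶠ z in 𝓝 y, lowerInverse V z ∈ Icc (s - δ) (s + δ) ∧ V (lowerInverse V z) = z := by
  filter_upwards [Ioo_mem_nhds h₁ h₂] with z hz
  exact lowerInverse_mem_Icc_and_apply_eq hV hVc hz.1 hz.2.le

lemma eventually_apply_sub_lt_apply_lt_apply_add (hVd : Differentiable ℝ V) {s : ℝ}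
    (hpos : ∀ᶠ t in 𝓝 s, 0 < deriv V t) :
    ∀ᶠ δ in 𝓝[>] 0, V (s - δ) < V s ∧ V s < V (s + δ) := by
  obtain ⟨ρ, hρ, hball⟩ := Metric.eventually_nhds_iff_ball.1 hpos
  rw [Real.ball_eq_Ioo] at hball
  have hmono : StrictMonoOn V (Ioo (s - ρ) (s + ρ)) :=
    strictMonoOn_of_deriv_pos (convex_Ioo _ _) hVd.continuous.continuousOn fun t ht =>
      hball t (interior_subset ht)
  filter_upwards [Ioo_mem_nhdsGT hρ] with δ ⟨hδ₀, hδρ⟩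
  have hs : s ∈ Ioo (s - ρ) (s + ρ) := ⟨by linarith, by linarith⟩
  exact ⟨hmono ⟨by linarith, by linarith⟩ hs (by linarith),
    hmono hs ⟨by linarith, by linarith⟩ (by linarith)⟩

variable (hV : Monotone V) (hVd : Differentiable ℝ V) {y : ℝ}
  (hy : V (lowerInverse V y) = y) (hpos : ∀ᶠ t in 𝓝 (lowerInverse V y), 0 < deriv V t)
include hV hVd hy hpos

lemma continuousAt_lowerInverse : ContinuousAt (lowerInverse V) y := by
  refine Metric.nhds_basis_closedBall.tendsto_right_iff.2 fun ε hε => ?_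
  obtain ⟨δ, ⟨h₁, h₂⟩, hδ⟩ :=
    ((eventually_apply_sub_lt_apply_lt_apply_add hVd hpos).and (Ioo_mem_nhdsGT hε)).exists
  rw [hy] at h₁ h₂
  filter_upwards [eventually_lowerInverse_mem_Icc_and_apply_eq hV hVd.continuous h₁ h₂]
    with z hz
  rw [Real.closedBall_eq_Icc]
  exact Icc_subset_Icc (by linarith [hδ.2]) (by linarith [hδ.2]) hz.1

lemma eventually_apply_lowerInverse : ∀ᶠ z in 𝓝 y, V (lowerInverse V z) = z := by
  obtain ⟨δ, h₁, h₂⟩ := (eventually_apply_sub_lt_apply_lt_apply_add hVd hpos).exists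
  rw [hy] at h₁ h₂
  exact (eventually_lowerInverse_mem_Icc_and_apply_eq hV hVd.continuous h₁ h₂).mono
    fun _ hz => hz.2

lemma hasDerivAt_lowerInverse :
    HasDerivAt (lowerInverse V) (deriv V (lowerInverse V y))⁻¹ y :=
  HasDerivAt.of_local_left_inverse (continuousAt_lowerInverse hV hVd hy hpos)
    (hVd _).hasDerivAt hpos.self_of_nhds.ne' (eventually_apply_lowerInverse hV hVd hy hpos)

lemma eventually_hasDerivAt_lowerInverse :
    ∀ᶠ z in 𝓝 y, V (lowerInverse V z) = z ∧
      HasDerivAt (lowerInverse V) (deriv V (lowerInverse V z))⁻¹ z := by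
  filter_upwards [eventually_apply_lowerInverse hV hVd hy hpos,
    Tendsto.eventually (continuousAt_lowerInverse hV hVd hy hpos)
      (eventually_eventually_nhds.2 hpos)]
    with z hz hz'
  exact ⟨hz, hasDerivAt_lowerInverse hV hVd hz hz'⟩

end LowerInverse

section RateFunction

variable {Ω : Type*} [MeasurableSpace Ω] {X : Ω → ℝ} {μ : Measure Ω}

local notation "𝒱" => deriv (cgf X μ)

noncomputable def rateFunction (X : Ω → ℝ) (μ : Measure Ω) (y : ℝ) : ℝ :=
  ∫ ω, (1 - Real.exp (lowerInverse (deriv (cgf X μ)) y * (X ω - y))) ∂μ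

variable [IsFiniteMeasure μ] (h : ∀ t, Integrable (fun ω => Real.exp (t * X ω)) μ)
include h

lemma rateFunction_eq : rateFunction X μ = fun y =>
    μ.real univ - Real.exp (-(y * lowerInverse 𝒱 y)) * mgf X μ (lowerInverse 𝒱 y) :=
  funext fun y => integral_one_sub_exp_mul_sub (h _) y

theorem hasDerivAt_rateFunction {y : ℝ} (hy : 𝒱 (lowerInverse 𝒱 y) = y)
    (hpos : 0 < deriv 𝒱 (lowerInverse 𝒱 y)) :
    HasDerivAt (rateFunction X μ)
      (lowerInverse 𝒱 y * Real.exp (-(y * lowerInverse 𝒱 y)) * mgf X μ (lowerInverse 𝒱 y)) y ∧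
    HasDerivAt (deriv (rateFunction X μ))
      ((1 / deriv 𝒱 (lowerInverse 𝒱 y) - lowerInverse 𝒱 y ^ 2) *
        Real.exp (-(y * lowerInverse 𝒱 y)) * mgf X μ (lowerInverse 𝒱 y)) y := by
  have hpos' : ∀ᶠ t in 𝓝 (lowerInverse 𝒱 y), 0 < deriv 𝒱 t :=
    (analyticAt_deriv_cgf h _).deriv.continuousAt.eventually (lt_mem_nhds hpos)
  set E := fun z => Real.exp (-(z * lowerInverse 𝒱 z)) * mgf X μ (lowerInverse 𝒱 z)
  have hE : ∀ᶠ z in 𝓝 y, HasDerivAt (lowerInverse 𝒱) (deriv 𝒱 (lowerInverse 𝒱 z))⁻¹ z ∧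
      HasDerivAt E (-(lowerInverse 𝒱 z * E z)) z := by
    filter_upwards [eventually_hasDerivAt_lowerInverse (monotone_deriv_cgf h)
      (differentiable_deriv_cgf h) hy hpos'] with z ⟨hz, hs⟩
    refine ⟨hs, hasDerivAt_exp_neg_mul_mul_comp ?_ hs⟩
    have hM := (analyticAt_mgf (mem_interior_integrableExpSet h (lowerInverse 𝒱 z)))
      |>.differentiableAt.hasDerivAt
    rwa [← mgf_mul_deriv_cgf h, hz, mul_comm] at hM
  have hR : ∀ᶠ z in 𝓝 y, HasDerivAt (rateFunction X μ) (lowerInverse 𝒱 z * E z) z :=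
    hE.mono fun z hz => by simpa [rateFunction_eq h] using hz.2.const_sub (μ.real univ)
  refine ⟨hR.self_of_nhds.congr_deriv (by ring), ?_⟩
  exact ((hE.self_of_nhds.1.mul hE.self_of_nhds.2).congr_deriv (by ring))
    |>.congr_of_eventuallyEq (hR.mono fun z hz => hz.deriv)

end RateFunction

theorem gamma_derivatives_uniform_kernel_general
    (l : ℝ → ℝ)
    (g : ℝ → ℝ) (hg_nonneg : ∀ v, 0 ≤ g v)
    (f : ℝ → ℝ) (hf_nonneg : ∀ v, 0 ≤ f v)
    -- (A3)
    (hA3ii : ∀ a : ℝ, Integrable (fun v => Real.exp (a * l v) * f v * g v))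
    -- V_x, its generalized inverse, and the bounds v₀(x), v₁(x)
    (V : ℝ → ℝ)
    (hV : ∀ t, V t = (∫ u, Real.exp (t * l u) * l u * f u * g u) /
      (∫ v, Real.exp (t * l v) * f v * g v))
    (Vinv : ℝ → ℝ) (hVinv : ∀ t, Vinv t = sInf {s | t ≤ V s})
    (v₀ v₁ : EReal) (hv₀ : v₀ = ⨅ t : ℝ, (V t : EReal)) (hv₁ : v₁ = ⨆ t : ℝ, (V t : EReal))
    -- the explicit rate function of the uniform-kernel case
    (γ : ℝ → ℝ)
    (hγ : ∀ lam : ℝ, γ lam = ∫ v, (1 - Real.exp (Vinv lam * (l v - lam))) * f v * g v)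
    (lam : ℝ) (hlam₀ : v₀ < (lam : EReal)) (hlam₁ : (lam : EReal) < v₁)
    -- V_x is strictly increasing near Vinv lam, with positive derivative there
    (hV'pos : 0 < deriv V (Vinv lam)) :
    HasDerivAt γ
      (Vinv lam * Real.exp (-(lam * Vinv lam)) *
        ∫ v, Real.exp (Vinv lam * l v) * f v * g v) lam ∧
    HasDerivAt (deriv γ)
      ((1 / deriv V (Vinv lam) - (Vinv lam) ^ 2) * Real.exp (-(lam * Vinv lam)) *
        ∫ v, Real.exp (Vinv lam * l v) * f v * g v) lam := by
  set ν := volume.withDensity fun v => ENNReal.ofReal (f v * g v)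
  have hw : Integrable (fun v => f v * g v) := by simpa using hA3ii 0
  have hw0 : 0 ≤ fun v => f v * g v := fun v => mul_nonneg (hf_nonneg v) (hg_nonneg v)
  have : IsFiniteMeasure ν := isFiniteMeasure_withDensity_ofReal hw.2
  have hν : ∀ F : ℝ → ℝ, ∫ v, F v * f v * g v = ∫ v, F v ∂ν := fun F => by
    simp only [ν, integral_withDensity_ofReal hw.aemeasurable hw0, mul_assoc]
  have hexp : ∀ t, Integrable (fun v => Real.exp (t * l v)) ν := fun t => by
    simpa only [ν, integrable_withDensity_ofReal_iff hw.aemeasurable hw0, mul_assoc]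
      using hA3ii t
  simp only [hν] at hV hγ ⊢
  obtain rfl : V = deriv (cgf l ν) := funext fun t => by
    rw [hV, deriv_cgf (mem_interior_integrableExpSet hexp t), mgf]
    simp_rw [mul_comm (l _)]
  obtain rfl : Vinv = lowerInverse (deriv (cgf l ν)) := funext hVinv
  obtain rfl : γ = rateFunction l ν := funext hγ
  obtain ⟨t₁, ht₁⟩ : ∃ t, deriv (cgf l ν) t < lam := by
    simpa [hv₀, iInf_lt_iff] using hlam₀
  obtain ⟨t₂, ht₂⟩ : ∃ t, lam < deriv (cgf l ν) t := by
    simpa [hv₁, lt_iSup_iff] using hlam₁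
  have hlam := lowerInverse_mem_Icc_and_apply_eq (monotone_deriv_cgf hexp)
    (differentiable_deriv_cgf hexp).continuous ht₁ ht₂.le
  exact hasDerivAt_rateFunction hexp hlam.2 hV'pos

theorem gamma_derivatives_uniform_kernel
    (l : ℝ → ℝ) (hl : Measurable l)
    (g : ℝ → ℝ) (hg_nonneg : ∀ v, 0 ≤ g v) (hg_prob : ∫ v, g v = 1)
    (f : ℝ → ℝ) (hf_nonneg : ∀ v, 0 ≤ f v)
    (hfg_pos : 0 < ∫ v, f v * g v)
    -- (A3)
    (hA3i : ∀ a b : ℝ, Integrable (fun v => (Real.exp (a + b * l v) - 1) * f v * g v))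
    (hA3ii : ∀ a : ℝ, Integrable (fun v => Real.exp (a * l v) * f v * g v))
    (hA3iii : ∀ a : ℝ, Integrable (fun v => Real.exp (a * l v) * f v * g v * l v))
    (hA3iv : ∀ a : ℝ, Integrable (fun v => Real.exp (a * l v) * f v * g v * (l v) ^ 2))
    -- V_x, its generalized inverse, and the bounds v₀(x), v₁(x)
    (V : ℝ → ℝ)
    (hV : ∀ t, V t = (∫ u, Real.exp (t * l u) * l u * f u * g u) /
      (∫ v, Real.exp (t * l v) * f v * g v))
    (Vinv : ℝ → ℝ) (hVinv : ∀ t, Vinv t = sInf {s | t ≤ V s})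
    (v₀ v₁ : EReal) (hv₀ : v₀ = ⨅ t : ℝ, (V t : EReal)) (hv₁ : v₁ = ⨆ t : ℝ, (V t : EReal))
    -- the explicit rate function of the uniform-kernel case
    (γ : ℝ → ℝ)
    (hγ : ∀ lam : ℝ, γ lam = ∫ v, (1 - Real.exp (Vinv lam * (l v - lam))) * f v * g v)
    (lam : ℝ) (hlam₀ : v₀ < (lam : EReal)) (hlam₁ : (lam : EReal) < v₁)
    -- V_x is strictly increasing near Vinv lam, with positive derivative there
    (hVstrict : ∃ ε > (0:ℝ), StrictMonoOn V (Ioo (Vinv lam - ε) (Vinv lam + ε)))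
    (hV'pos : 0 < deriv V (Vinv lam)) :
    HasDerivAt γ
      (Vinv lam * Real.exp (-(lam * Vinv lam)) *
        ∫ v, Real.exp (Vinv lam * l v) * f v * g v) lam ∧
    HasDerivAt (deriv γ)
      ((1 / deriv V (Vinv lam) - (Vinv lam) ^ 2) * Real.exp (-(lam * Vinv lam)) *
        ∫ v, Real.exp (Vinv lam * l v) * f v * g v) lam :=
  gamma_derivatives_uniform_kernel_general l g hg_nonneg f hf_nonneg hA3ii V hV Vinv hVinv v₀ v₁ hv₀
    hv₁ γ hγ lam hlam₀ hlam₁ hV'pos
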